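/- arXiv:2207.09723 — 2 statements merged into one kernel-verified Lean document; each statement's English description precedes it below -/
import Mathlib

section
/- Let d ≥ 1 and let 1 ≤ q' ≤ p' ≤ 2 with 1/r' = 1/2 + 1/q' − 1/p'. Then for all V ∈ L^{r'}(ℝ^d) and φ ∈ L^{p'}(ℝ^d), one has (∫_{ℝ^d} ‖ y ↦ V(y + y')·φ(y) ‖_{L^{q'}(ℝ^d)}^2 dy')^{1/2} ≤ ‖V‖_{L^{r'}} · ‖φ‖_{L^{p'}}. -/
open MeasureTheory
open scoped ENNReal

variable {E : Type*} [MeasurableSpace E] [AddGroup E] [MeasurableAdd₂ E]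
  {μ : Measure E} [μ.IsAddLeftInvariant] [μ.IsAddRightInvariant] [SFinite μ]

theorem young_key (f g : E → ℝ≥0∞) (hf : Measurable f) (hg : Measurable g)
    {s A B : ℝ} (hA : 1 ≤ A) (hB : 1 ≤ B) (hAs : A ≤ s) (hBs : B ≤ s)
    (hsum : 1/A + 1/B = 1 + 1/s) :
    ∫⁻ y', (∫⁻ y, f (y + y') * g y ∂μ) ^ s ∂μ
      ≤ (∫⁻ y, f y ^ A ∂μ) ^ (s/A) * (∫⁻ y, g y ^ B ∂μ) ^ (s/B) := by
  have hA0 : 0 < A := lt_of_lt_of_le one_pos hA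
  have hB0 : 0 < B := lt_of_lt_of_le one_pos hB
  have hs0 : 0 < s := lt_of_lt_of_le hA0 hAs
  set c : ℝ := 1/A - 1/s with hc_def
  set e : ℝ := 1/B - 1/s with he_def
  have hc : 0 ≤ c := by
    have := one_div_le_one_div_of_le hA0 hAs
    simpa [hc_def] using this
  have he : 0 ≤ e := by
    have := one_div_le_one_div_of_le hB0 hBs
    simpa [he_def] using this
  set I₂ : ℝ≥0∞ := ∫⁻ y, f y ^ A ∂μ with hI₂
  set I₃ : ℝ≥0∞ := ∫⁻ y, g y ^ B ∂μ with hI₃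
  -- pointwise Hölder bound
  have step1 : ∀ y', (∫⁻ y, f (y + y') * g y ∂μ)
      ≤ (∫⁻ y, f (y + y') ^ A * g y ^ B ∂μ) ^ (1/s) * I₂ ^ c * I₃ ^ e := by
    intro y'
    have hfm : Measurable fun y => f (y + y') :=
      hf.comp (measurable_id.add_const y')
    have hpt : ∀ y, f (y + y') * g y =
        (fun y => (f (y + y') ^ A * g y ^ B) ^ (1/s) *
          ((f (y + y') ^ A) ^ c * (g y ^ B) ^ e)) y := by
      intro y
      have hx : ∀ x : ℝ≥0∞, (x ^ A) ^ (1/s) * (x ^ A) ^ c = x := by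
        intro x
        rw [← ENNReal.rpow_add_of_nonneg _ _ (by positivity) hc, ← ENNReal.rpow_mul]
        have : A * (1/s + c) = 1 := by rw [hc_def, add_sub_cancel, mul_one_div_cancel hA0.ne']
        rw [this, ENNReal.rpow_one]
      have hy : ∀ x : ℝ≥0∞, (x ^ B) ^ (1/s) * (x ^ B) ^ e = x := by
        intro x
        rw [← ENNReal.rpow_add_of_nonneg _ _ (by positivity) he, ← ENNReal.rpow_mul]
        have : B * (1/s + e) = 1 := by rw [he_def, add_sub_cancel, mul_one_div_cancel hB0.ne']
        rw [this, ENNReal.rpow_one]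
      simp only [ENNReal.mul_rpow_of_nonneg _ _ (by positivity : (0:ℝ) ≤ 1/s)]
      calc f (y + y') * g y
          = ((f (y+y') ^ A) ^ (1/s) * (f (y+y') ^ A) ^ c) *
            ((g y ^ B) ^ (1/s) * (g y ^ B) ^ e) := by rw [hx, hy]
        _ = (f (y+y') ^ A) ^ (1/s) * (g y ^ B) ^ (1/s) *
            ((f (y+y') ^ A) ^ c * (g y ^ B) ^ e) := by ring
    calc (∫⁻ y, f (y + y') * g y ∂μ)
        = ∫⁻ y, (f (y + y') ^ A * g y ^ B) ^ (1/s) *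
            ((f (y + y') ^ A) ^ c * (g y ^ B) ^ e) ∂μ := by
          exact lintegral_congr hpt
      _ ≤ (∫⁻ y, f (y + y') ^ A * g y ^ B ∂μ) ^ (1/s) *
            ((∫⁻ y, f (y + y') ^ A ∂μ) ^ c * (∫⁻ y, g y ^ B ∂μ) ^ e) := by
          -- three-function Hölder via lintegral_prod_norm_pow_le
          have := ENNReal.lintegral_prod_norm_pow_le (μ := μ) (Finset.univ : Finset (Fin 3))
            (f := ![fun y => f (y + y') ^ A * g y ^ B, fun y => f (y + y') ^ A,
              fun y => g y ^ B])
            (p := ![1/s, c, e])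
            (by
              intro i _
              fin_cases i
              · exact ((hfm.pow_const A).mul (hg.pow_const B)).aemeasurable
              · exact (hfm.pow_const A).aemeasurable
              · exact (hg.pow_const B).aemeasurable)
            (by
              show (1/s) + (c + (e + 0)) = 1
              rw [hc_def, he_def]; linarith)
            (by
              intro i _
              fin_cases i
              · show (0:ℝ) ≤ 1/s; positivity
              · exact hc
              · exact he)
          simpa [Fin.prod_univ_three, mul_assoc] using this
      _ = (∫⁻ y, f (y + y') ^ A * g y ^ B ∂μ) ^ (1/s) * (I₂ ^ c * I₃ ^ e) := by
          rw [lintegral_add_right_eq_self (fun y => f y ^ A) y']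
      _ = _ := by ring
  -- raise to power s
  set C : ℝ≥0∞ := I₂ ^ (c*s) * I₃ ^ (e*s) with hC
  have step2 : ∀ y', (∫⁻ y, f (y + y') * g y ∂μ) ^ s
      ≤ (∫⁻ y, f (y + y') ^ A * g y ^ B ∂μ) * C := by
    intro y'
    calc (∫⁻ y, f (y + y') * g y ∂μ) ^ s
        ≤ ((∫⁻ y, f (y + y') ^ A * g y ^ B ∂μ) ^ (1/s) * I₂ ^ c * I₃ ^ e) ^ s :=
          ENNReal.rpow_le_rpow (step1 y') hs0.le
      _ = ((∫⁻ y, f (y + y') ^ A * g y ^ B ∂μ) ^ (1/s)) ^ s * ((I₂ ^ c) ^ s * (I₃ ^ e) ^ s) := by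
          rw [ENNReal.mul_rpow_of_nonneg _ _ hs0.le, ENNReal.mul_rpow_of_nonneg _ _ hs0.le,
            mul_assoc]
      _ = (∫⁻ y, f (y + y') ^ A * g y ^ B ∂μ) * C := by
          rw [← ENNReal.rpow_mul, ← ENNReal.rpow_mul, ← ENNReal.rpow_mul,
            one_div_mul_cancel hs0.ne', ENNReal.rpow_one, hC]
  have hjoint : Measurable fun p : E × E => f (p.2 + p.1) ^ A * g p.2 ^ B :=
    ((hf.comp (measurable_snd.add measurable_fst)).pow_const A).mul
      ((hg.comp measurable_snd).pow_const B)
  have hJm : Measurable fun y' => ∫⁻ y, f (y + y') ^ A * g y ^ B ∂μ :=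
    Measurable.lintegral_prod_right' hjoint
  have hJint : (∫⁻ y', ∫⁻ y, f (y + y') ^ A * g y ^ B ∂μ ∂μ) = I₂ * I₃ := by
    rw [lintegral_lintegral_swap hjoint.aemeasurable]
    calc ∫⁻ y, ∫⁻ y', f (y + y') ^ A * g y ^ B ∂μ ∂μ
        = ∫⁻ y, I₂ * g y ^ B ∂μ := by
          refine lintegral_congr fun y => ?_
          have e0 : ∫⁻ y', f (y + y') ^ A * g y ^ B ∂μ
              = (∫⁻ y', f (y + y') ^ A ∂μ) * g y ^ B :=
            lintegral_mul_const'' _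
              ((hf.comp (measurable_const.add measurable_id)).pow_const A).aemeasurable
          have e1 : (∫⁻ y', f (y + y') ^ A ∂μ) = I₂ :=
            lintegral_add_left_eq_self (fun z => f z ^ A) y
          rw [e0, e1, mul_comm]
      _ = I₂ * I₃ := lintegral_const_mul I₂ (hg.pow_const B)
  calc ∫⁻ y', (∫⁻ y, f (y + y') * g y ∂μ) ^ s ∂μ
      ≤ ∫⁻ y', (∫⁻ y, f (y + y') ^ A * g y ^ B ∂μ) * C ∂μ := lintegral_mono step2
    _ = (I₂ * I₃) * C := by rw [lintegral_mul_const C hJm, hJint]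
    _ = (I₂ * I₂ ^ (c*s)) * (I₃ * I₃ ^ (e*s)) := by rw [hC]; ring
    _ = I₂ ^ (s/A) * I₃ ^ (s/B) := by
        have h1 : (1:ℝ) + c * s = s / A := by rw [hc_def]; field_simp; ring
        have h2 : (1:ℝ) + e * s = s / B := by rw [he_def]; field_simp; ring
        have hmul : ∀ (x : ℝ≥0∞) (u : ℝ), 0 ≤ u → x * x ^ u = x ^ (1 + u) := by
          intro x u hu
          rw [ENNReal.rpow_add_of_nonneg _ _ zero_le_one hu, ENNReal.rpow_one]
        rw [hmul I₂ _ (mul_nonneg hc hs0.le), hmul I₃ _ (mul_nonneg he hs0.le), h1, h2]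

theorem stmt0_meas (d : ℕ) (q' p' r' : ℝ)
    (hq : 1 ≤ q') (hqp : q' ≤ p') (hp : p' ≤ 2)
    (hr : 1 / r' = 1 / 2 + 1 / q' - 1 / p')
    (V φ : EuclideanSpace ℝ (Fin d) → ℂ)
    (hVm : Measurable V) (hφm : Measurable φ) :
    eLpNorm (fun y' => (eLpNorm (fun y => V (y + y') * φ y) (ENNReal.ofReal q') volume).toReal)
        2 volume
      ≤ eLpNorm V (ENNReal.ofReal r') volume * eLpNorm φ (ENNReal.ofReal p') volume := by
  have hq0 : 0 < q' := lt_of_lt_of_le one_pos hq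
  have hp0 : 0 < p' := lt_of_lt_of_le hq0 hqp
  have hq2 : q' ≤ 2 := hqp.trans hp
  have hpq' : 1/p' ≤ 1/q' := one_div_le_one_div_of_le hq0 hqp
  have h2p' : 1/2 ≤ 1/p' := one_div_le_one_div_of_le hp0 hp
  have hrhalf : 1/2 ≤ 1/r' := by rw [hr]; linarith
  have hr0 : 0 < r' := one_div_pos.mp (lt_of_lt_of_le (by norm_num) hrhalf)
  have hr2 : r' ≤ 2 := le_of_one_div_le_one_div (by norm_num) hrhalf
  have hrq : 1/r' ≤ 1/q' := by rw [hr]; linarith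
  have hqr : q' ≤ r' := le_of_one_div_le_one_div hr0 hrq
  set s : ℝ := 2 / q' with hs_def
  set A : ℝ := r' / q' with hA_def
  set B : ℝ := p' / q' with hB_def
  have hA : 1 ≤ A := (one_le_div hq0).mpr hqr
  have hB : 1 ≤ B := (one_le_div hq0).mpr hqp
  have hAs : A ≤ s := by rw [hA_def, hs_def]; gcongr
  have hBs : B ≤ s := by rw [hB_def, hs_def]; gcongr
  have hs1 : 1 ≤ s := hA.trans hAs
  have hs0 : 0 < s := lt_of_lt_of_le one_pos hs1
  have hsum : 1/A + 1/B = 1 + 1/s := by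
    rw [hA_def, hB_def, hs_def, one_div_div, one_div_div, one_div_div]
    field_simp
    field_simp at hr
    linarith
  set f : EuclideanSpace ℝ (Fin d) → ℝ≥0∞ := fun z => (‖V z‖₊ : ℝ≥0∞) ^ q' with hf_def
  set g : EuclideanSpace ℝ (Fin d) → ℝ≥0∞ := fun z => (‖φ z‖₊ : ℝ≥0∞) ^ q' with hg_def
  have hf : Measurable f := hVm.enorm.pow_const q'
  have hg : Measurable g := hφm.enorm.pow_const q'
  have key := young_key (μ := (volume : Measure (EuclideanSpace ℝ (Fin d)))) f g hf hg
    hA hB hAs hBs hsum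
  have hinner : ∀ y', eLpNorm (fun y => V (y + y') * φ y) (ENNReal.ofReal q') volume
      = (∫⁻ y, f (y + y') * g y) ^ (1/q') := by
    intro y'
    rw [eLpNorm_eq_lintegral_rpow_enorm_toReal (ENNReal.ofReal_pos.mpr hq0).ne' ENNReal.ofReal_ne_top,
      ENNReal.toReal_ofReal hq0.le]
    simp only [enorm_eq_nnnorm]
    congr 1
    refine lintegral_congr fun y => ?_
    rw [hf_def, hg_def]
    simp only [nnnorm_mul, ENNReal.coe_mul, ENNReal.mul_rpow_of_nonneg _ _ hq0.le]
  calc eLpNorm (fun y' =>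
        (eLpNorm (fun y => V (y + y') * φ y) (ENNReal.ofReal q') volume).toReal) 2 volume
      = (∫⁻ y', (‖(eLpNorm (fun y => V (y + y') * φ y) (ENNReal.ofReal q') volume).toReal‖₊
          : ℝ≥0∞) ^ (2:ℝ)) ^ (1/(2:ℝ)) := by
        rw [eLpNorm_eq_lintegral_rpow_enorm_toReal two_ne_zero ENNReal.ofNat_ne_top]
        norm_num [enorm_eq_nnnorm]
    _ ≤ (∫⁻ y', (∫⁻ y, f (y + y') * g y) ^ s) ^ (1/(2:ℝ)) := by
        refine ENNReal.rpow_le_rpow (lintegral_mono fun y' => ?_) (by norm_num)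
        have h1 : (‖(eLpNorm (fun y => V (y + y') * φ y) (ENNReal.ofReal q') volume).toReal‖₊
            : ℝ≥0∞) ≤ (∫⁻ y, f (y + y') * g y) ^ (1/q') := by
          rw [← enorm_eq_nnnorm, Real.enorm_eq_ofReal ENNReal.toReal_nonneg, ← hinner y']
          exact ENNReal.ofReal_toReal_le
        calc (‖(eLpNorm (fun y => V (y + y') * φ y) (ENNReal.ofReal q') volume).toReal‖₊
              : ℝ≥0∞) ^ (2:ℝ)
            ≤ ((∫⁻ y, f (y + y') * g y) ^ (1/q')) ^ (2:ℝ) :=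
              ENNReal.rpow_le_rpow h1 (by norm_num)
          _ = (∫⁻ y, f (y + y') * g y) ^ s := by
              rw [← ENNReal.rpow_mul]
              congr 1
              rw [hs_def]; ring
    _ ≤ ((∫⁻ y, f y ^ A) ^ (s/A) * (∫⁻ y, g y ^ B) ^ (s/B)) ^ (1/(2:ℝ)) :=
        ENNReal.rpow_le_rpow key (by norm_num)
    _ = (∫⁻ y, f y ^ A) ^ ((s/A) * (1/2)) * (∫⁻ y, g y ^ B) ^ ((s/B) * (1/2)) := by
        rw [ENNReal.mul_rpow_of_nonneg _ _ (by norm_num : (0:ℝ) ≤ 1/2),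
          ← ENNReal.rpow_mul, ← ENNReal.rpow_mul]
    _ = eLpNorm V (ENNReal.ofReal r') volume * eLpNorm φ (ENNReal.ofReal p') volume := by
        rw [eLpNorm_eq_lintegral_rpow_enorm_toReal (ENNReal.ofReal_pos.mpr hr0).ne'
            ENNReal.ofReal_ne_top,
          eLpNorm_eq_lintegral_rpow_enorm_toReal (ENNReal.ofReal_pos.mpr hp0).ne'
            ENNReal.ofReal_ne_top,
          ENNReal.toReal_ofReal hr0.le, ENNReal.toReal_ofReal hp0.le]
        simp only [enorm_eq_nnnorm]
        congr 1
        · have hints : ∫⁻ y, f y ^ A = ∫⁻ y, (‖V y‖₊ : ℝ≥0∞) ^ r' := by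
            refine lintegral_congr fun z => ?_
            rw [hf_def, ← ENNReal.rpow_mul]
            congr 1
            rw [hA_def]
            field_simp
          rw [hints]
          congr 1
          rw [hs_def, hA_def]
          field_simp
        · have hints : ∫⁻ y, g y ^ B = ∫⁻ y, (‖φ y‖₊ : ℝ≥0∞) ^ p' := by
            refine lintegral_congr fun z => ?_
            rw [hg_def, ← ENNReal.rpow_mul]
            congr 1
            rw [hB_def]
            field_simp
          rw [hints]
          congr 1
          rw [hs_def, hB_def]
          field_simp


/-- Mixed-norm estimate (Lemma on translated products via Young's inequality):
for `1 ≤ q' ≤ p' ≤ 2` and `1/r' = 1/2 + 1/q' - 1/p'`, the `L²`-in-`y'` norm of the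
`L^{q'}`-in-`y` norm of `V(y + y') φ(y)` is bounded by `‖V‖_{r'} ‖φ‖_{p'}`. -/
theorem stmt0 (d : ℕ) (hd : 1 ≤ d) (q' p' r' : ℝ)
    (hq : 1 ≤ q') (hqp : q' ≤ p') (hp : p' ≤ 2)
    (hr : 1 / r' = 1 / 2 + 1 / q' - 1 / p')
    (V φ : EuclideanSpace ℝ (Fin d) → ℂ)
    (hV : MemLp V (ENNReal.ofReal r') volume)
    (hφ : MemLp φ (ENNReal.ofReal p') volume) :
    eLpNorm (fun y' => (eLpNorm (fun y => V (y + y') * φ y) (ENNReal.ofReal q') volume).toReal)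
        2 volume
      ≤ eLpNorm V (ENNReal.ofReal r') volume * eLpNorm φ (ENNReal.ofReal p') volume := by
  obtain ⟨V₀, hV₀sm, hVae⟩ := hV.1
  obtain ⟨φ₀, hφ₀sm, hφae⟩ := hφ.1
  have hinner_eq : ∀ y' : EuclideanSpace ℝ (Fin d),
      eLpNorm (fun y => V (y + y') * φ y) (ENNReal.ofReal q') volume
        = eLpNorm (fun y => V₀ (y + y') * φ₀ y) (ENNReal.ofReal q') volume := by
    intro y'
    refine eLpNorm_congr_ae ?_
    have h1 : (fun y => V (y + y')) =ᵐ[volume] fun y => V₀ (y + y') :=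
      (measurePreserving_add_right volume y').quasiMeasurePreserving.ae_eq_comp hVae
    exact h1.mul hφae
  have houter : (fun y' : EuclideanSpace ℝ (Fin d) =>
      (eLpNorm (fun y => V (y + y') * φ y) (ENNReal.ofReal q') volume).toReal)
      = fun y' => (eLpNorm (fun y => V₀ (y + y') * φ₀ y) (ENNReal.ofReal q') volume).toReal :=
    funext fun y' => by rw [hinner_eq y']
  rw [houter, eLpNorm_congr_ae hVae, eLpNorm_congr_ae hφae]
  exact stmt0_meas d q' p' r' hq hqp hp hr V₀ φ₀ hV₀sm.measurable hφ₀sm.measurable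
end

section
/- Let (H_n)_{n∈ℕ} be Hilbert spaces, H = ⊕_{n} H_n their Hilbert direct sum, and A a densely defined operator mapping each H_n to H_{n+1} with ‖A f_n‖ ≤ C·√(n+1)·‖f_n‖ for f_n ∈ H_n. For α < α', define the weighted operator e^{αN} A e^{−α'N} acting on H_n as e^{α(n+1) − α'n} A. Then e^{αN} A e^{−α'N} extends to a bounded operator on H with norm at most C·e^{α'} / (2√(α' − α)). -/
open scoped ENNReal

private lemma sqrt_exp_key (β : ℝ) (hβ : 0 < β) (t : ℝ) (ht : 0 ≤ t) :
    Real.sqrt t * Real.exp (-(β * t)) ≤ 1 / (2 * Real.sqrt β) := by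
  have hsb : 0 < Real.sqrt β := Real.sqrt_pos.mpr hβ
  have he : 0 < Real.exp (β * t) := Real.exp_pos _
  have h1 : 2 * Real.sqrt (β * t) ≤ 1 + β * t := by
    have hsq := Real.sq_sqrt (mul_nonneg hβ.le ht)
    nlinarith [sq_nonneg (Real.sqrt (β * t) - 1)]
  have h2 : (1 : ℝ) + β * t ≤ Real.exp (β * t) := by
    linarith [Real.add_one_le_exp (β * t)]
  have h3 : 2 * Real.sqrt β * Real.sqrt t ≤ Real.exp (β * t) := by
    rw [mul_assoc, ← Real.sqrt_mul hβ.le]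
    linarith
  have h4 : Real.sqrt t ≤ Real.exp (β * t) / (2 * Real.sqrt β) := by
    rw [le_div_iff₀ (by positivity)]
    nlinarith
  rw [Real.exp_neg]
  calc Real.sqrt t * (Real.exp (β * t))⁻¹
      ≤ (Real.exp (β * t) / (2 * Real.sqrt β)) * (Real.exp (β * t))⁻¹ := by
        gcongr
    _ = 1 / (2 * Real.sqrt β) := by field_simp

/-- Weighted creation-type operator bound on a Hilbert direct sum: if `A` maps the `n`-th
sector to the `(n+1)`-st with `‖A fₙ‖ ≤ C √(n+1) ‖fₙ‖`, then for `α < α'` the operator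
`e^{αN} A e^{-α'N}` (acting as `e^{α(n+1) - α'n} A` on the `n`-th sector) extends to a
bounded operator on `⊕ₙ Hₙ` of norm at most `C e^{α'} / (2 √(α' - α))`. -/
theorem stmt12 (H : ℕ → Type*) [∀ n, NormedAddCommGroup (H n)]
    [∀ n, InnerProductSpace ℂ (H n)] [∀ n, CompleteSpace (H n)]
    (A : ∀ n, H n →L[ℂ] H (n + 1)) (C : ℝ) (hC : 0 ≤ C)
    (hA : ∀ n (f : H n), ‖A n f‖ ≤ C * Real.sqrt (n + 1) * ‖f‖)
    (α α' : ℝ) (h : α < α') :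
    ∃ B : lp H 2 →L[ℂ] lp H 2,
      ‖B‖ ≤ C * Real.exp α' / (2 * Real.sqrt (α' - α)) ∧
      ∀ x : lp H 2, (B x) 0 = 0 ∧
        ∀ n, (B x) (n + 1)
          = ((Real.exp (α * (n + 1) - α' * n) : ℝ) : ℂ) • A n (x n) := by
  classical
  set c : ℕ → ℝ := fun n => Real.exp (α * (n + 1) - α' * n) with hc
  set D : ℝ := C * Real.exp α' / (2 * Real.sqrt (α' - α)) with hD
  have hβ : 0 < α' - α := sub_pos.mpr h
  have hD0 : 0 ≤ D := by positivity
  -- key scalar bound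
  have hkey : ∀ n : ℕ, c n * (C * Real.sqrt (n + 1)) ≤ D := by
    intro n
    have hcn : c n = Real.exp α' * Real.exp (-((α' - α) * (n + 1))) := by
      rw [hc, ← Real.exp_add]
      ring_nf
    have hk := sqrt_exp_key (α' - α) hβ (n + 1) (by positivity)
    have := mul_le_mul_of_nonneg_left hk (by positivity : (0 : ℝ) ≤ C * Real.exp α')
    rw [hD]
    calc c n * (C * Real.sqrt (n + 1))
        = (C * Real.exp α') * (Real.sqrt (n + 1) * Real.exp (-((α' - α) * (n + 1)))) := by
          rw [hcn]; ring
      _ ≤ (C * Real.exp α') * (1 / (2 * Real.sqrt (α' - α))) := this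
      _ = C * Real.exp α' / (2 * Real.sqrt (α' - α)) := by ring
  -- sector bound
  have hsec : ∀ n (f : H n), ‖((c n : ℝ) : ℂ) • A n f‖ ≤ D * ‖f‖ := by
    intro n f
    have hcpos : 0 < c n := Real.exp_pos _
    rw [norm_smul]
    have h1 : ‖((c n : ℝ) : ℂ)‖ = c n := by
      rw [Complex.norm_real, Real.norm_eq_abs, abs_of_pos hcpos]
    rw [h1]
    calc c n * ‖A n f‖ ≤ c n * (C * Real.sqrt (n + 1) * ‖f‖) := by
          exact mul_le_mul_of_nonneg_left (hA n f) hcpos.le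
      _ = (c n * (C * Real.sqrt (n + 1))) * ‖f‖ := by ring
      _ ≤ D * ‖f‖ := mul_le_mul_of_nonneg_right (hkey n) (norm_nonneg _)
  -- the raw function
  let F0 : (∀ n, H n) → (∀ n, H n) := fun x m =>
    Nat.casesOn m 0 (fun n => ((c n : ℝ) : ℂ) • A n (x n))
  have hmem : ∀ x : lp H 2, Memℓp (F0 x) 2 := by
    intro x
    apply memℓp_gen
    have hsum : Summable (fun n => (D * ‖x n‖) ^ (2 : ℝ≥0∞).toReal) := by
      have hx : Summable (fun n => ‖x n‖ ^ (2 : ℝ≥0∞).toReal) :=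
        (lp.memℓp x).summable (by norm_num)
      simpa [Real.mul_rpow hD0 (norm_nonneg _)] using hx.mul_left (D ^ (2 : ℝ≥0∞).toReal)
    have hsum2 : Summable (fun m : ℕ =>
        (Nat.casesOn m 0 (fun n => (D * ‖x n‖) ^ (2 : ℝ≥0∞).toReal) : ℝ)) := by
      rw [← summable_nat_add_iff 1]
      exact hsum
    refine Summable.of_nonneg_of_le (fun m => ?_) (fun m => ?_) hsum2
    · positivity
    · cases m with
      | zero => simp [F0]
      | succ n =>
        have : ‖F0 x (n + 1)‖ ≤ D * ‖x n‖ := hsec n (x n)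
        exact Real.rpow_le_rpow (norm_nonneg _) this (by norm_num)
  -- the linear map
  let F : lp H 2 →ₗ[ℂ] lp H 2 :=
    { toFun := fun x => ⟨F0 x, hmem x⟩
      map_add' := by
        intro x y
        apply lp.ext
        funext m
        cases m with
        | zero => show (0 : H 0) = 0 + 0; rw [add_zero]
        | succ n =>
            show ((c n : ℝ) : ℂ) • A n (x n + y n)
              = ((c n : ℝ) : ℂ) • A n (x n) + ((c n : ℝ) : ℂ) • A n (y n)
            rw [map_add, smul_add]
      map_smul' := by
        intro a x
        apply lp.ext
        funext m
        cases m with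
        | zero => show (0 : H 0) = a • 0; rw [smul_zero]
        | succ n =>
            show ((c n : ℝ) : ℂ) • A n (a • x n) = a • (((c n : ℝ) : ℂ) • A n (x n))
            rw [map_smul, smul_comm] }
  have hbound : ∀ x : lp H 2, ‖F x‖ ≤ D * ‖x‖ := by
    intro x
    apply lp.norm_le_of_tsum_le (by norm_num) (by positivity)
    have hx : Summable (fun n => ‖x n‖ ^ (2 : ℝ≥0∞).toReal) :=
      (lp.memℓp x).summable (by norm_num)
    have hFx : Summable (fun m => ‖(F x) m‖ ^ (2 : ℝ≥0∞).toReal) :=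
      (lp.memℓp (F x)).summable (by norm_num)
    have hle : ∀ m, ‖(F x) m‖ ^ (2 : ℝ≥0∞).toReal ≤
        (Nat.casesOn m 0 (fun n => (D * ‖x n‖) ^ (2 : ℝ≥0∞).toReal) : ℝ) := by
      intro m
      cases m with
      | zero =>
        show ‖F0 x 0‖ ^ (2 : ℝ≥0∞).toReal ≤ _
        simp [F0]
      | succ n =>
        show ‖F0 x (n + 1)‖ ^ (2 : ℝ≥0∞).toReal ≤ _
        exact Real.rpow_le_rpow (norm_nonneg _) (hsec n (x n)) (by norm_num)
    have hsum : Summable (fun n => (D * ‖x n‖) ^ (2 : ℝ≥0∞).toReal) := by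
      simpa [Real.mul_rpow hD0 (norm_nonneg _)] using hx.mul_left (D ^ (2 : ℝ≥0∞).toReal)
    have hsum2 : Summable (fun m : ℕ =>
        (Nat.casesOn m 0 (fun n => (D * ‖x n‖) ^ (2 : ℝ≥0∞).toReal) : ℝ)) := by
      rw [← summable_nat_add_iff 1]; exact hsum
    calc ∑' m, ‖(F x) m‖ ^ (2 : ℝ≥0∞).toReal
        ≤ ∑' m, (Nat.casesOn m 0 (fun n => (D * ‖x n‖) ^ (2 : ℝ≥0∞).toReal) : ℝ) :=
          Summable.tsum_le_tsum hle hFx hsum2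
      _ = ∑' n, (D * ‖x n‖) ^ (2 : ℝ≥0∞).toReal := by
          rw [Summable.tsum_eq_zero_add hsum2]
          simp
      _ = D ^ (2 : ℝ≥0∞).toReal * ∑' n, ‖x n‖ ^ (2 : ℝ≥0∞).toReal := by
          rw [← tsum_mul_left]
          congr 1; funext n; exact Real.mul_rpow hD0 (norm_nonneg _)
      _ = D ^ (2 : ℝ≥0∞).toReal * ‖x‖ ^ (2 : ℝ≥0∞).toReal := by
          rw [lp.norm_rpow_eq_tsum (by norm_num) x]
      _ = (D * ‖x‖) ^ (2 : ℝ≥0∞).toReal := (Real.mul_rpow hD0 (norm_nonneg _)).symm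
  refine ⟨F.mkContinuous D hbound, LinearMap.mkContinuous_norm_le F hD0 hbound, ?_⟩
  intro x
  exact ⟨rfl, fun n => rfl⟩
end
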